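/- arXiv:2112.03094 — 7 statements merged into one kernel-verified Lean document; each statement's English description precedes it below -/
import Mathlib

section
/- For c > 1, the function φ(x) = (c^(1/x) - 1)^x is strictly decreasing on (0, ∞). -/
open Real Set

/-!
Substituting `y = 1 / x`, it suffices that `y ↦ (c ^ y - 1) ^ (1 / y)` is strictly increasing.
For `0 < s < t`, raising to the power `t` and writing `b = c ^ s`, `p = t / s > 1`, this becomes
`(b - 1) ^ p < b ^ p - 1`, i.e. the strict superadditivity `(b - 1) ^ p + 1 ^ p < b ^ p`
of `u ↦ u ^ p` for `p > 1`.
-/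

theorem Real.add_rpow_lt_rpow_add {a b p : ℝ} (ha : 0 < a) (hb : 0 < b) (hp : 1 < p) :
    a ^ p + b ^ p < (a + b) ^ p := by
  have hs : 0 < a + b := add_pos ha hb
  have ha' : (a / (a + b)) ^ p < a / (a + b) :=
    rpow_lt_self_of_lt_one (div_pos ha hs) ((div_lt_one hs).2 (by linarith)) hp
  have hb' : (b / (a + b)) ^ p < b / (a + b) :=
    rpow_lt_self_of_lt_one (div_pos hb hs) ((div_lt_one hs).2 (by linarith)) hp
  calc a ^ p + b ^ p = ((a / (a + b)) ^ p + (b / (a + b)) ^ p) * (a + b) ^ p := by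
        rw [div_rpow ha.le hs.le, div_rpow hb.le hs.le]; field_simp
    _ < (a / (a + b) + b / (a + b)) * (a + b) ^ p := by gcongr
    _ = (a + b) ^ p := by rw [← add_div, div_self hs.ne', one_mul]

theorem Real.sub_one_rpow_lt_rpow_sub_one {b p : ℝ} (hb : 1 < b) (hp : 1 < p) :
    (b - 1) ^ p < b ^ p - 1 := by
  have h := Real.add_rpow_lt_rpow_add (sub_pos.2 hb) one_pos hp
  rw [one_rpow, sub_add_cancel] at h
  linarith

theorem Real.strictMonoOn_rpow_sub_one_rpow_one_div {c : ℝ} (hc : 1 < c) :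
    StrictMonoOn (fun y : ℝ => (c ^ y - 1) ^ (1 / y)) (Ioi 0) := by
  intro s (hs : 0 < s) t (ht : 0 < t) hst
  have hc0 : 0 ≤ c := by linarith
  have hcs : 0 < c ^ s - 1 := sub_pos.2 (one_lt_rpow hc hs)
  have hct : 0 < c ^ t - 1 := sub_pos.2 (one_lt_rpow hc ht)
  have key : (c ^ s - 1) ^ (t / s) < c ^ t - 1 := by
    have h := Real.sub_one_rpow_lt_rpow_sub_one (one_lt_rpow hc hs) ((one_lt_div hs).2 hst)
    rwa [← rpow_mul hc0, mul_div_cancel₀ _ hs.ne'] at h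
  rw [← rpow_lt_rpow_iff (rpow_nonneg hcs.le _) (rpow_nonneg hct.le _) ht, ← rpow_mul hcs.le,
    ← rpow_mul hct.le, one_div_mul_cancel ht.ne', rpow_one, one_div_mul_eq_div]
  exact key

theorem phi_strictAnti (c : ℝ) (hc : 1 < c) :
    StrictAntiOn (fun x : ℝ => (c ^ (1 / x) - 1) ^ x) (Set.Ioi 0) := by
  intro x (hx : 0 < x) y (hy : 0 < y) hxy
  have h := Real.strictMonoOn_rpow_sub_one_rpow_one_div hc (one_div_pos.2 hy) (one_div_pos.2 hx)
    (one_div_lt_one_div_of_lt hx hxy)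
  simpa only [one_div_one_div] using h
end

section
/- For c > 1, the derivative of g(x) = x · log(c^(1/x) - 1) is negative for all x > 0; in particular log(c^(1/x) - 1) - (c^(1/x)/(c^(1/x) - 1)) · (log c)/x < 0. -/
/-! With `t = c ^ (1 / x) > 1` we have `log c / x = log t`, so the derivative equals
`log (t - 1) - t / (t - 1) * log t`, which is negative because
`log (t - 1) < log t ≤ t / (t - 1) * log t`. -/

open Real

lemma log_sub_one_lt_div_mul_log {t : ℝ} (ht : 1 < t) : log (t - 1) < t / (t - 1) * log t := by
  have ht1 : 0 < t - 1 := by linarith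
  calc log (t - 1) < log t := log_lt_log ht1 (by linarith)
    _ ≤ t / (t - 1) * log t :=
      le_mul_of_one_le_left (log_pos ht).le ((one_le_div ht1).mpr (by linarith))

lemma hasDerivAt_mul_log_rpow_one_div_sub_one {c x : ℝ} (hc : 0 < c) (hx : x ≠ 0)
    (hcx : c ^ (1 / x) ≠ 1) :
    HasDerivAt (fun y : ℝ => y * log (c ^ (1 / y) - 1))
      (log (c ^ (1 / x) - 1) - c ^ (1 / x) / (c ^ (1 / x) - 1) * (log c / x)) x := by
  have hinv : HasDerivAt (fun y : ℝ => 1 / y) (-(x ^ 2)⁻¹) x := by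
    simpa only [one_div] using hasDerivAt_inv hx
  have hpow : HasDerivAt (fun y : ℝ => c ^ (1 / y)) (c ^ (1 / x) * log c * -(x ^ 2)⁻¹) x :=
    (hasStrictDerivAt_const_rpow hc (1 / x)).hasDerivAt.comp x hinv
  refine ((hasDerivAt_id' x).mul ((hpow.sub_const 1).log (sub_ne_zero.mpr hcx))).congr_deriv ?_
  field_simp
  ring

theorem g_deriv_neg (c : ℝ) (hc : 1 < c) (x : ℝ) (hx : 0 < x) :
    deriv (fun y : ℝ => y * Real.log (c ^ (1 / y) - 1)) x < 0 ∧
    Real.log (c ^ (1 / x) - 1) -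
      (c ^ (1 / x) / (c ^ (1 / x) - 1)) * (Real.log c / x) < 0 := by
  have hc0 : 0 < c := by linarith
  have ht : 1 < c ^ (1 / x) := one_lt_rpow hc (by positivity)
  have hlog : log c / x = log (c ^ (1 / x)) := by
    rw [log_rpow hc0]
    ring
  have hneg : log (c ^ (1 / x) - 1) - c ^ (1 / x) / (c ^ (1 / x) - 1) * (log c / x) < 0 := by
    rw [hlog, sub_neg]
    exact log_sub_one_lt_div_mul_log ht
  rw [(hasDerivAt_mul_log_rpow_one_div_sub_one hc0 hx.ne' ht.ne').deriv]
  exact ⟨hneg, hneg⟩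
end

section
/- If a > b > 0, then Φ(x) = (a^(1/x) - b^(1/x))^x = b · ((a/b)^(1/x) - 1)^x is strictly decreasing on (0,∞), satisfies 0 < Φ(x) < a for all x > 0, tends to a as x → 0⁺, and tends to 0 as x → ∞. -/
/-!
Substituting `x ↦ x / y` turns monotonicity into the strict subadditivity of `t ↦ t ^ r` for
`r < 1`: with `u = a ^ (1 / x)`, `v = b ^ (1 / x)` and `r = x / y < 1`,
`a ^ (1 / y) - b ^ (1 / y) = u ^ r - v ^ r < (u - v) ^ r`, and raising to the power `y` gives
`Φ y < Φ x`. Writing `Φ x = a * (1 - (b / a) ^ (1 / x)) ^ x`, the bound `t ≤ t ^ x` for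
`t, x ∈ [0, 1]` squeezes `Φ x` between `a * (1 - (b / a) ^ (1 / x))` and `a` as `x → 0⁺`.
As `x → ∞` the base `a ^ (1 / x) - b ^ (1 / x)` tends to `0`, so eventually
`Φ x ≤ (1 / 2) ^ x`.
-/

open Filter Topology

namespace Real

variable {u v w r : ℝ}

theorem rpow_add_lt_add_rpow (hw : 0 < w) (hv : 0 < v) (hr : r < 1) :
    (w + v) ^ r < w ^ r + v ^ r := by
  have hwv : 0 < w + v := by positivity
  have hlt : ∀ t, 0 < t → t < w + v → t * (w + v) ^ (r - 1) < t ^ r := fun t ht htwv =>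
    calc t * (w + v) ^ (r - 1) < t * t ^ (r - 1) :=
          mul_lt_mul_of_pos_left (rpow_lt_rpow_of_neg ht htwv (by linarith)) ht
      _ = t ^ r := by rw [rpow_sub_one ht.ne', mul_div_cancel₀ _ ht.ne']
  calc (w + v) ^ r = w * (w + v) ^ (r - 1) + v * (w + v) ^ (r - 1) := by
        rw [← add_mul, rpow_sub_one hwv.ne', mul_div_cancel₀ _ hwv.ne']
    _ < w ^ r + v ^ r := add_lt_add (hlt w hw (by linarith)) (hlt v hv (by linarith))

theorem rpow_sub_rpow_lt_sub_rpow (hv : 0 < v) (hvu : v < u) (hr : r < 1) :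
    u ^ r - v ^ r < (u - v) ^ r := by
  have := rpow_add_lt_add_rpow (sub_pos.mpr hvu) hv hr
  rw [sub_add_cancel] at this
  linarith

theorem tendsto_const_rpow_one_div_atTop {a : ℝ} (ha : a ≠ 0) :
    Tendsto (fun x : ℝ => a ^ (1 / x)) atTop (𝓝 1) := by
  have := (continuousAt_const_rpow ha).tendsto.comp tendsto_inv_atTop_zero
  rw [rpow_zero] at this
  simp only [one_div]
  exact this

theorem tendsto_const_rpow_one_div_nhdsGT_zero {c : ℝ} (hc0 : 0 ≤ c) (hc1 : c < 1) :
    Tendsto (fun x : ℝ => c ^ (1 / x)) (𝓝[>] 0) (𝓝 0) := by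
  simp only [one_div]
  exact (tendsto_rpow_atTop_of_base_lt_one c (by linarith) hc1).comp tendsto_inv_nhdsGT_zero

theorem tendsto_rpow_self_atTop_of_tendsto_zero {f : ℝ → ℝ} (hf : Tendsto f atTop (𝓝 0))
    (hf0 : ∀ᶠ x in atTop, 0 ≤ f x) : Tendsto (fun x => f x ^ x) atTop (𝓝 0) := by
  have hhalf : ∀ᶠ x in atTop, f x ≤ 1 / 2 := hf.eventually (ge_mem_nhds (by norm_num))
  refine tendsto_of_tendsto_of_tendsto_of_le_of_le' tendsto_const_nhds
    (tendsto_rpow_atTop_of_base_lt_one (1 / 2) (by norm_num) (by norm_num)) ?_ ?_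
  · filter_upwards [hf0] with x hx using rpow_nonneg hx x
  · filter_upwards [hf0, hhalf, eventually_ge_atTop 0] with x hx0 hx hx_nonneg
    exact rpow_le_rpow hx0 hx hx_nonneg

end Real

open Real

noncomputable def Phi (a b x : ℝ) : ℝ := (a ^ (1 / x) - b ^ (1 / x)) ^ x

section Phi

variable {a b x : ℝ}

theorem Phi_pos (hb : 0 ≤ b) (hab : b < a) (hx : 0 < x) : 0 < Phi a b x :=
  rpow_pos_of_pos (sub_pos.mpr (rpow_lt_rpow hb hab (by positivity))) x

theorem Phi_lt (hb : 0 < b) (hab : b < a) (hx : 0 < x) : Phi a b x < a := by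
  have hbase : 0 ≤ a ^ (1 / x) - b ^ (1 / x) :=
    sub_nonneg.mpr (rpow_le_rpow hb.le hab.le (by positivity))
  calc Phi a b x < (a ^ (1 / x)) ^ x :=
        rpow_lt_rpow hbase (sub_lt_self _ (rpow_pos_of_pos hb _)) hx
    _ = a := by rw [← rpow_mul (hb.trans hab).le, one_div_mul_cancel hx.ne', rpow_one]

theorem Phi_eq_mul_one_sub_rpow (hb : 0 ≤ b) (hab : b < a) (hx : 0 < x) :
    Phi a b x = a * (1 - (b / a) ^ (1 / x)) ^ x := by
  have ha : 0 < a := hb.trans_lt hab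
  have hbase : a ^ (1 / x) - b ^ (1 / x) = a ^ (1 / x) * (1 - (b / a) ^ (1 / x)) := by
    rw [div_rpow hb ha.le, mul_sub, mul_div_cancel₀ _ (rpow_pos_of_pos ha _).ne', mul_one]
  have hnonneg : 0 ≤ 1 - (b / a) ^ (1 / x) :=
    sub_nonneg.mpr (rpow_le_one (by positivity) ((div_lt_one ha).mpr hab).le (by positivity))
  rw [Phi, hbase, mul_rpow (rpow_nonneg ha.le _) hnonneg, ← rpow_mul ha.le,
    one_div_mul_cancel hx.ne', rpow_one]

theorem strictAntiOn_Phi (hb : 0 < b) (hab : b < a) : StrictAntiOn (Phi a b) (Set.Ioi 0) := by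
  intro x (hx : 0 < x) y (hy : 0 < y) hxy
  have hpow : ∀ c : ℝ, 0 ≤ c → c ^ (1 / y) = (c ^ (1 / x)) ^ (x / y) := fun c hc => by
    rw [← rpow_mul hc]
    congr 1
    field_simp
  have hlt : b ^ (1 / x) < a ^ (1 / x) := rpow_lt_rpow hb.le hab (by positivity)
  calc Phi a b y = ((a ^ (1 / x)) ^ (x / y) - (b ^ (1 / x)) ^ (x / y)) ^ y := by
        rw [Phi, hpow a (hb.trans hab).le, hpow b hb.le]
    _ < ((a ^ (1 / x) - b ^ (1 / x)) ^ (x / y)) ^ y := by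
        refine rpow_lt_rpow (sub_nonneg.mpr (rpow_le_rpow (by positivity) hlt.le (by positivity)))
          (rpow_sub_rpow_lt_sub_rpow (by positivity) hlt ((div_lt_one hy).mpr hxy)) hy
    _ = Phi a b x := by rw [← rpow_mul (sub_pos.mpr hlt).le, div_mul_cancel₀ _ hy.ne', Phi]

theorem tendsto_Phi_nhdsGT_zero (hb : 0 < b) (hab : b < a) :
    Tendsto (Phi a b) (𝓝[>] 0) (𝓝 a) := by
  have ha : 0 < a := hb.trans hab
  have hlower : Tendsto (fun x : ℝ => a * (1 - (b / a) ^ (1 / x))) (𝓝[>] 0) (𝓝 a) := by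
    simpa using (tendsto_const_nhds (x := a)).mul ((tendsto_const_nhds (x := (1 : ℝ))).sub
      (tendsto_const_rpow_one_div_nhdsGT_zero (by positivity) ((div_lt_one ha).mpr hab)))
  refine tendsto_of_tendsto_of_tendsto_of_le_of_le' hlower tendsto_const_nhds ?_ ?_
  · filter_upwards [Ioc_mem_nhdsGT zero_lt_one] with x ⟨hx0, hx1⟩
    rw [Phi_eq_mul_one_sub_rpow hb.le hab hx0]
    refine mul_le_mul_of_nonneg_left (self_le_rpow_of_le_one ?_ ?_ hx1) ha.le
    · exact sub_nonneg.mpr (rpow_le_one (by positivity) ((div_lt_one ha).mpr hab).le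
        (by positivity))
    · exact sub_le_self _ (rpow_nonneg (by positivity) _)
  · filter_upwards [self_mem_nhdsWithin] with x (hx : 0 < x) using (Phi_lt hb hab hx).le

theorem tendsto_Phi_atTop (hb : 0 < b) (hba : b ≤ a) : Tendsto (Phi a b) atTop (𝓝 0) := by
  refine tendsto_rpow_self_atTop_of_tendsto_zero ?_ ?_
  · simpa using (tendsto_const_rpow_one_div_atTop (hb.trans_le hba).ne').sub
      (tendsto_const_rpow_one_div_atTop hb.ne')
  · filter_upwards [eventually_gt_atTop 0] with x hx
    exact sub_nonneg.mpr (rpow_le_rpow hb.le hba (by positivity))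

end Phi

theorem Phi_properties (a b : ℝ) (hb : 0 < b) (hab : b < a) :
    StrictAntiOn (fun x : ℝ => (a ^ (1 / x) - b ^ (1 / x)) ^ x) (Set.Ioi 0) ∧
    (∀ x : ℝ, 0 < x →
      0 < (a ^ (1 / x) - b ^ (1 / x)) ^ x ∧ (a ^ (1 / x) - b ^ (1 / x)) ^ x < a) ∧
    Filter.Tendsto (fun x : ℝ => (a ^ (1 / x) - b ^ (1 / x)) ^ x)
      (nhdsWithin 0 (Set.Ioi 0)) (nhds a) ∧
    Filter.Tendsto (fun x : ℝ => (a ^ (1 / x) - b ^ (1 / x)) ^ x)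
      Filter.atTop (nhds 0) :=
  ⟨strictAntiOn_Phi hb hab, fun _ hx => ⟨Phi_pos hb.le hab hx, Phi_lt hb hab hx⟩,
    tendsto_Phi_nhdsGT_zero hb hab, tendsto_Phi_atTop hb hab.le⟩
end

section
/- Let β₀, β₂ > 0 with β₀ ≠ β₂, and define T₅(p) = |β₀^(1/p) - β₂^(1/p)|^p for p > 0. Then T₅ is strictly decreasing on (0,∞), 0 < T₅(p) < max{β₀, β₂} for all p > 0, lim_{p→0⁺} T₅(p) = max{β₀, β₂}, and lim_{p→∞} T₅(p) = 0. -/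
open Real Filter Topology

private lemma key_ineq {u s : ℝ} (hu0 : 0 < u) (hu1 : u < 1) (hs : 1 < s) :
    (1 - u) ^ s < 1 - u ^ s := by
  have h1 : (1 - u) ^ s < (1 - u) ^ (1 : ℝ) :=
    Real.rpow_lt_rpow_of_exponent_gt (by linarith) (by linarith) hs
  have h2 : u ^ s < u ^ (1 : ℝ) := Real.rpow_lt_rpow_of_exponent_gt hu0 hu1 hs
  rw [Real.rpow_one] at h1 h2
  linarith

private lemma f_mono {t : ℝ} (ht0 : 0 < t) (ht1 : t < 1) {q q' : ℝ} (hq : 0 < q)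
    (hqq : q < q') : (1 - t ^ q) ^ (1 / q) < (1 - t ^ q') ^ (1 / q') := by
  have hq' : 0 < q' := hq.trans hqq
  have hu0 : 0 < t ^ q := Real.rpow_pos_of_pos ht0 q
  have hu1 : t ^ q < 1 := Real.rpow_lt_one ht0.le ht1 hq
  have hs : 1 < q' / q := (one_lt_div hq).2 hqq
  have hts : (t ^ q) ^ (q' / q) = t ^ q' := by
    rw [← Real.rpow_mul ht0.le]
    congr 1
    field_simp
  have hkey : (1 - t ^ q) ^ (q' / q) < 1 - t ^ q' := by
    rw [← hts]; exact key_ineq hu0 hu1 hs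
  have := Real.rpow_lt_rpow (Real.rpow_nonneg (by linarith) _) hkey (one_div_pos.2 hq')
  rwa [← Real.rpow_mul (by linarith : (0:ℝ) ≤ 1 - t ^ q), show q' / q * (1 / q') = 1 / q by
    field_simp] at this

private lemma T5_main {a b : ℝ} (ha : 0 < a) (hb : 0 < b) (hba : b < a) :
    StrictAntiOn (fun p : ℝ => |a ^ (1 / p) - b ^ (1 / p)| ^ p) (Set.Ioi 0) ∧
    (∀ p : ℝ, 0 < p →
      0 < |a ^ (1 / p) - b ^ (1 / p)| ^ p ∧ |a ^ (1 / p) - b ^ (1 / p)| ^ p < a) ∧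
    Tendsto (fun p : ℝ => |a ^ (1 / p) - b ^ (1 / p)| ^ p) (𝓝[>] 0) (𝓝 a) ∧
    Tendsto (fun p : ℝ => |a ^ (1 / p) - b ^ (1 / p)| ^ p) atTop (𝓝 0) := by
  set t : ℝ := b / a with htdef
  have ht0 : 0 < t := div_pos hb ha
  have ht1 : t < 1 := (div_lt_one ha).2 hba
  have hpos1 : ∀ p : ℝ, 0 < p → 0 < 1 - t ^ (1 / p) := fun p hp =>
    sub_pos.2 (Real.rpow_lt_one ht0.le ht1 (one_div_pos.2 hp))
  have hid : ∀ p : ℝ, 0 < p →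
      |a ^ (1 / p) - b ^ (1 / p)| ^ p = a * (1 - t ^ (1 / p)) ^ p := by
    intro p hp
    have hp' : 0 < 1 / p := one_div_pos.2 hp
    have hlt : b ^ (1 / p) < a ^ (1 / p) := Real.rpow_lt_rpow hb.le hba hp'
    have hbt : b ^ (1 / p) = a ^ (1 / p) * t ^ (1 / p) := by
      rw [htdef, Real.div_rpow hb.le ha.le]
      field_simp [ne_of_gt (Real.rpow_pos_of_pos ha (1 / p))]
    rw [abs_of_pos (by linarith), hbt, ← mul_one_sub,
      Real.mul_rpow (Real.rpow_nonneg ha.le _) (hpos1 p hp).le,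
      ← Real.rpow_mul ha.le, one_div_mul_cancel hp.ne', Real.rpow_one]
  have hexp : ∀ p : ℝ, 0 < p →
      |a ^ (1 / p) - b ^ (1 / p)| ^ p = a * Real.exp (p * Real.log (1 - t ^ (1 / p))) := by
    intro p hp
    rw [hid p hp, Real.rpow_def_of_pos (hpos1 p hp), mul_comm (Real.log _) p]
  refine ⟨?_, ?_, ?_, ?_⟩
  · -- strict anti
    intro p₁ hp₁ p₂ hp₂ hlt
    simp only [Set.mem_Ioi] at hp₁ hp₂
    simp only
    rw [hid p₁ hp₁, hid p₂ hp₂]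
    refine (mul_lt_mul_iff_right₀ ha).2 ?_
    have := f_mono ht0 ht1 (one_div_pos.2 hp₂) (one_div_lt_one_div_of_lt hp₁ hlt)
    rwa [one_div_one_div, one_div_one_div] at this
  · -- bounds
    intro p hp
    rw [hid p hp]
    constructor
    · exact mul_pos ha (Real.rpow_pos_of_pos (hpos1 p hp) p)
    · refine mul_lt_of_lt_one_right ha (Real.rpow_lt_one (hpos1 p hp).le ?_ hp)
      have : 0 < t ^ (1 / p) := Real.rpow_pos_of_pos ht0 _
      linarith
  · -- limit at 0⁺
    have hG : Tendsto (fun q : ℝ => a * Real.exp (q⁻¹ * Real.log (1 - t ^ q)))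
        atTop (𝓝 a) := by
      have h1 : Tendsto (fun q : ℝ => t ^ q) atTop (𝓝 0) :=
        tendsto_rpow_atTop_of_base_lt_one t (by linarith) ht1
      have h1' : Tendsto (fun q : ℝ => 1 - t ^ q) atTop (𝓝 1) := by
        simpa using h1.const_sub 1
      have h2 : Tendsto (fun q : ℝ => Real.log (1 - t ^ q)) atTop (𝓝 0) := by
        simpa [Real.log_one] using h1'.log one_ne_zero
      have h3 : Tendsto (fun q : ℝ => q⁻¹ * Real.log (1 - t ^ q)) atTop (𝓝 0) := by
        simpa using tendsto_inv_atTop_zero.mul h2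
      have h4 := (Real.continuous_exp.tendsto 0).comp h3
      simpa using tendsto_const_nhds.mul h4
    have hcomp := hG.comp tendsto_inv_nhdsGT_zero
    refine hcomp.congr' ?_
    filter_upwards [self_mem_nhdsWithin] with p (hp : p ∈ Set.Ioi (0:ℝ))
    have hp' : (0:ℝ) < p := hp
    simp only [Function.comp]
    rw [inv_inv, ← one_div, hexp p hp']
  · -- limit at ∞
    have h1 : Tendsto (fun p : ℝ => t ^ (1 / p)) atTop (𝓝 1) := by
      have hinv : Tendsto (fun p : ℝ => 1 / p) atTop (𝓝 0) := by
        simpa [one_div] using tendsto_inv_atTop_zero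
      have : Tendsto (fun p : ℝ => t ^ (1 / p)) atTop (𝓝 (t ^ (0:ℝ))) :=
        (Real.continuousAt_const_rpow ht0.ne').tendsto.comp hinv
      simpa using this
    have h2 : Tendsto (fun p : ℝ => 1 - t ^ (1 / p)) (atTop) (𝓝[>] 0) := by
      refine tendsto_nhdsWithin_of_tendsto_nhds_of_eventually_within _ ?_ ?_
      · simpa using h1.const_sub 1
      · filter_upwards [eventually_gt_atTop (0:ℝ)] with p hp
        exact hpos1 p hp
    have hL : Tendsto (fun p : ℝ => Real.log (1 - t ^ (1 / p))) atTop atBot :=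
      Real.tendsto_log_nhdsGT_zero.comp h2
    have hPL : Tendsto (fun p : ℝ => p * Real.log (1 - t ^ (1 / p))) atTop atBot := by
      refine tendsto_atBot_mono' atTop ?_ hL
      filter_upwards [eventually_ge_atTop (1:ℝ)] with p hp
      have hLe : Real.log (1 - t ^ (1 / p)) ≤ 0 := by
        refine Real.log_nonpos (hpos1 p (by linarith)).le ?_
        have : 0 < t ^ (1 / p) := Real.rpow_pos_of_pos ht0 _
        linarith
      calc p * Real.log (1 - t ^ (1 / p)) ≤ 1 * Real.log (1 - t ^ (1 / p)) :=
            mul_le_mul_of_nonpos_right hp hLe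
        _ = Real.log (1 - t ^ (1 / p)) := one_mul _
    have hE := Real.tendsto_exp_atBot.comp hPL
    have : Tendsto (fun p : ℝ => a * Real.exp (p * Real.log (1 - t ^ (1 / p))))
        atTop (𝓝 0) := by
      simpa using tendsto_const_nhds.mul hE
    refine this.congr' ?_
    filter_upwards [eventually_gt_atTop (0:ℝ)] with p hp
    exact (hexp p hp).symm

theorem T5_properties (β₀ β₂ : ℝ) (h0 : 0 < β₀) (h2 : 0 < β₂) (hne : β₀ ≠ β₂) :
    StrictAntiOn (fun p : ℝ => |β₀ ^ (1 / p) - β₂ ^ (1 / p)| ^ p) (Set.Ioi 0) ∧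
    (∀ p : ℝ, 0 < p →
      0 < |β₀ ^ (1 / p) - β₂ ^ (1 / p)| ^ p ∧
      |β₀ ^ (1 / p) - β₂ ^ (1 / p)| ^ p < max β₀ β₂) ∧
    Filter.Tendsto (fun p : ℝ => |β₀ ^ (1 / p) - β₂ ^ (1 / p)| ^ p)
      (nhdsWithin 0 (Set.Ioi 0)) (nhds (max β₀ β₂)) ∧
    Filter.Tendsto (fun p : ℝ => |β₀ ^ (1 / p) - β₂ ^ (1 / p)| ^ p)
      Filter.atTop (nhds 0) := by
  rcases lt_or_gt_of_ne hne with h | h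
  · have hfe : ∀ p : ℝ, |β₀ ^ (1 / p) - β₂ ^ (1 / p)| ^ p
        = |β₂ ^ (1 / p) - β₀ ^ (1 / p)| ^ p := fun p => by rw [abs_sub_comm]
    simp only [hfe, max_eq_right h.le]
    exact T5_main h2 h0 h
  · simp only [max_eq_left h.le]
    exact T5_main h0 h2 h
end

section
/- Let β₀, β₁, β₂ > 0 and d₀, d₁, d₂ > 0 with d₀+d₁+d₂ = 1, and suppose 1/β₁ - 1/β₀ < (d₂/d₁)·(1/β₀ - 1/β₂). Then for every t > 0, d₀ + d₁·(1 + t/β₁)/(1 + t/β₀) + d₂·(1 + t/β₂)/(1 + t/β₀) < 1, and hence ω₀(t) = d₀(1 + t/β₀)/Σ_s d_s(1 + t/β_s) > d₀. -/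
theorem omega0_gt_d0 (β₀ β₁ β₂ d₀ d₁ d₂ : ℝ)
    (hβ₀ : 0 < β₀) (hβ₁ : 0 < β₁) (hβ₂ : 0 < β₂)
    (hd₀ : 0 < d₀) (hd₁ : 0 < d₁) (hd₂ : 0 < d₂)
    (hsum : d₀ + d₁ + d₂ = 1)
    (hkey : 1 / β₁ - 1 / β₀ < d₂ / d₁ * (1 / β₀ - 1 / β₂)) :
    ∀ t : ℝ, 0 < t →
      d₀ + d₁ * ((1 + t / β₁) / (1 + t / β₀)) + d₂ * ((1 + t / β₂) / (1 + t / β₀)) < 1 ∧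
      d₀ * (1 + t / β₀) / (d₀ * (1 + t / β₀) + d₁ * (1 + t / β₁) + d₂ * (1 + t / β₂)) > d₀ := by
  intro t ht
  have hA : 0 < 1 + t / β₀ := by positivity
  have hB : 0 < 1 + t / β₁ := by positivity
  have hC : 0 < 1 + t / β₂ := by positivity
  have hkey' : d₁ / β₁ + d₂ / β₂ < (d₁ + d₂) / β₀ := by
    rw [div_sub_div _ _ (ne_of_gt hβ₁) (ne_of_gt hβ₀), div_sub_div _ _ (ne_of_gt hβ₀) (ne_of_gt hβ₂), div_mul_div_comm] at hkey
    rw [div_lt_div_iff₀ (by positivity) (by positivity)] at hkey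
    rw [div_add_div _ _ (ne_of_gt hβ₁) (ne_of_gt hβ₂), div_lt_div_iff₀ (by positivity) hβ₀]
    nlinarith [hkey, mul_pos hβ₀ hβ₂, mul_pos hβ₁ hβ₂]
  have hS : d₁ * (1 + t / β₁) + d₂ * (1 + t / β₂) < (d₁ + d₂) * (1 + t / β₀) := by
    have h := mul_lt_mul_of_pos_left hkey' ht
    have e1 : t * (d₁ / β₁ + d₂ / β₂) = d₁ * (t / β₁) + d₂ * (t / β₂) := by ring
    have e2 : t * ((d₁ + d₂) / β₀) = (d₁ + d₂) * (t / β₀) := by ring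
    rw [e1, e2] at h
    linarith
  have hSpos : 0 < d₀ * (1 + t / β₀) + d₁ * (1 + t / β₁) + d₂ * (1 + t / β₂) := by positivity
  constructor
  · have heq : d₀ + d₁ * ((1 + t / β₁) / (1 + t / β₀)) + d₂ * ((1 + t / β₂) / (1 + t / β₀))
      = (d₀ * (1 + t / β₀) + d₁ * (1 + t / β₁) + d₂ * (1 + t / β₂)) / (1 + t / β₀) := by
      field_simp
    rw [heq, div_lt_one hA]
    nlinarith
  · rw [gt_iff_lt, lt_div_iff₀ hSpos]
    have hlt : d₀ * (1 + t / β₀) + d₁ * (1 + t / β₁) + d₂ * (1 + t / β₂) < 1 + t / β₀ := by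
      nlinarith
    nlinarith [mul_lt_mul_of_pos_left hlt hd₀]
end

section
/- Let β₀, β₁, β₂ > 0, d₀, d₁, d₂ > 0 with d₀+d₁+d₂ = 1, and suppose 1/β₁ - 1/β₀ < (d₂/d₁)·(1/β₀ - 1/β₂). Then the function t ↦ d₀ + d₁·(β₀(β₁+t))/(β₁(β₀+t)) + d₂·(β₀(β₂+t))/(β₂(β₀+t)) is strictly decreasing in t on (0,∞); equivalently, if 0 < T_p < T_q then ω₀(T_q) > ω₀(T_p), where ω₀(t) = d₀(1+t/β₀)/Σ_s d_s(1+t/β_s). -/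
theorem omega0_monotone (β₀ β₁ β₂ d₀ d₁ d₂ : ℝ)
    (hβ₀ : 0 < β₀) (hβ₁ : 0 < β₁) (hβ₂ : 0 < β₂)
    (hd₀ : 0 < d₀) (hd₁ : 0 < d₁) (hd₂ : 0 < d₂)
    (hsum : d₀ + d₁ + d₂ = 1)
    (hkey : 1 / β₁ - 1 / β₀ < d₂ / d₁ * (1 / β₀ - 1 / β₂)) :
    StrictAntiOn
      (fun t : ℝ => d₀ + d₁ * (β₀ * (β₁ + t)) / (β₁ * (β₀ + t))
        + d₂ * (β₀ * (β₂ + t)) / (β₂ * (β₀ + t))) (Set.Ioi 0) ∧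
    ∀ Tp Tq : ℝ, 0 < Tp → Tp < Tq →
      d₀ * (1 + Tq / β₀) / (d₀ * (1 + Tq / β₀) + d₁ * (1 + Tq / β₁) + d₂ * (1 + Tq / β₂)) >
      d₀ * (1 + Tp / β₀) / (d₀ * (1 + Tp / β₀) + d₁ * (1 + Tp / β₁) + d₂ * (1 + Tp / β₂)) := by
  set f : ℝ → ℝ := fun t => d₀ + d₁ * (β₀ * (β₁ + t)) / (β₁ * (β₀ + t))
      + d₂ * (β₀ * (β₂ + t)) / (β₂ * (β₀ + t)) with hf
  -- key positivity
  have h1 : d₁ * (1 / β₁ - 1 / β₀) < d₂ * (1 / β₀ - 1 / β₂) := by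
    have h := mul_lt_mul_of_pos_left hkey hd₁
    calc d₁ * (1 / β₁ - 1 / β₀) < d₁ * (d₂ / d₁ * (1 / β₀ - 1 / β₂)) := h
      _ = d₂ * (1 / β₀ - 1 / β₂) := by field_simp
  have hA : 0 < d₁ * β₂ * (β₁ - β₀) + d₂ * β₁ * (β₂ - β₀) := by
    have h2 := mul_lt_mul_of_pos_left h1 (by positivity : (0:ℝ) < β₀ * β₁ * β₂)
    have e1 : β₀ * β₁ * β₂ * (d₁ * (1 / β₁ - 1 / β₀)) = d₁ * β₂ * (β₀ - β₁) := by
      field_simp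
    have e2 : β₀ * β₁ * β₂ * (d₂ * (1 / β₀ - 1 / β₂)) = d₂ * β₁ * (β₂ - β₀) := by
      field_simp
    rw [e1, e2] at h2
    linarith
  have hmono : StrictAntiOn f (Set.Ioi 0) := by
    intro a ha b hb hab
    have ha' : 0 < β₀ + a := by have := Set.mem_Ioi.mp ha; linarith
    have hb' : 0 < β₀ + b := by have := Set.mem_Ioi.mp hb; linarith
    have key : f a - f b =
        β₀ * (b - a) * (d₁ * β₂ * (β₁ - β₀) + d₂ * β₁ * (β₂ - β₀))
          / (β₁ * β₂ * (β₀ + a) * (β₀ + b)) := by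
      rw [hf]
      field_simp
      ring
    have hpos : 0 < β₀ * (b - a) * (d₁ * β₂ * (β₁ - β₀) + d₂ * β₁ * (β₂ - β₀))
        / (β₁ * β₂ * (β₀ + a) * (β₀ + b)) := by
      apply div_pos
      · exact mul_pos (mul_pos hβ₀ (by linarith)) hA
      · positivity
    show f b < f a
    have h3 : 0 < f a - f b := by rw [key]; exact hpos
    linarith
  refine ⟨hmono, ?_⟩
  intro Tp Tq hTp hTpq
  have hTq : 0 < Tq := lt_trans hTp hTpq
  have hfpos : ∀ t : ℝ, 0 < t → 0 < f t := by
    intro t ht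
    have h1 : 0 < β₀ + t := by linarith
    have : 0 < d₁ * (β₀ * (β₁ + t)) / (β₁ * (β₀ + t)) := by positivity
    have : 0 < d₂ * (β₀ * (β₂ + t)) / (β₂ * (β₀ + t)) := by positivity
    rw [hf]
    positivity
  have hD : ∀ t : ℝ, 0 < t →
      d₀ * (1 + t / β₀) + d₁ * (1 + t / β₁) + d₂ * (1 + t / β₂) = f t * (1 + t / β₀) := by
    intro t ht
    have h1 : (0:ℝ) < β₀ + t := by linarith
    rw [hf]
    field_simp
  have hX : ∀ t : ℝ, 0 < t →
      d₀ * (1 + t / β₀) / (f t * (1 + t / β₀)) = d₀ / f t := by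
    intro t ht
    have hc : (1 : ℝ) + t / β₀ ≠ 0 := by positivity
    rw [mul_div_mul_right _ _ hc]
  rw [hD Tp hTp, hD Tq hTq, hX Tp hTp, hX Tq hTq]
  have hlt : f Tq < f Tp := hmono (Set.mem_Ioi.mpr hTp) (Set.mem_Ioi.mpr hTq) hTpq
  exact div_lt_div_of_pos_left hd₀ (hfpos Tq hTq) hlt
end

section
/- For a > b > 0, the two-sided bound b·(a/b - 1)^x < Φ(x) does not hold in general, but the upper bound holds: Φ(x) = (a^(1/x) - b^(1/x))^x < a - b for all x > 1. -/
/-!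
For `0 < p < 1` the map `t ↦ t ^ p` is strictly concave on `[0, ∞)` and vanishes at `0`, hence
strictly subadditive: `a ^ p < (a - b) ^ p + b ^ p`. Raising `a ^ p - b ^ p < (a - b) ^ p` to the
power `x = 1 / p` gives the bound.
-/

open Real Set

namespace StrictConcaveOn

variable {f : ℝ → ℝ}

theorem mul_lt_apply_mul (hf : StrictConcaveOn ℝ (Ici 0) f) (hf₀ : 0 ≤ f 0) {t z : ℝ}
    (ht₀ : 0 < t) (ht₁ : t < 1) (hz : 0 < z) : t * f z < f (t * z) := by
  have h := hf.2 (mem_Ici.2 hz.le) self_mem_Ici hz.ne' ht₀ (sub_pos.2 ht₁) (add_sub_cancel t 1)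
  simp only [smul_eq_mul, mul_zero, add_zero] at h
  nlinarith

theorem apply_add_lt (hf : StrictConcaveOn ℝ (Ici 0) f) (hf₀ : 0 ≤ f 0) {x y : ℝ}
    (hx : 0 < x) (hy : 0 < y) : f (x + y) < f x + f y := by
  have hxy : 0 < x + y := add_pos hx hy
  set t := x / (x + y)
  have ht₀ : 0 < t := div_pos hx hxy
  have ht₁ : t < 1 := (div_lt_one hxy).2 (lt_add_of_pos_right x hy)
  have hx_eq : t * (x + y) = x := div_mul_cancel₀ x hxy.ne'
  have hy_eq : (1 - t) * (x + y) = y := by rw [sub_mul, one_mul, hx_eq, add_sub_cancel_left]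
  have hfx := hf.mul_lt_apply_mul hf₀ ht₀ ht₁ hxy
  have hfy := hf.mul_lt_apply_mul hf₀ (sub_pos.2 ht₁) (sub_lt_self 1 ht₀) hxy
  rw [hx_eq] at hfx
  rw [hy_eq] at hfy
  linarith

end StrictConcaveOn

namespace Real

theorem rpow_add_lt_add_rpow_s19 {p x y : ℝ} (hp₀ : 0 < p) (hp₁ : p < 1) (hx : 0 < x) (hy : 0 < y) :
    (x + y) ^ p < x ^ p + y ^ p :=
  (strictConcaveOn_rpow hp₀ hp₁).apply_add_lt (zero_rpow hp₀.ne').ge hx hy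

theorem rpow_sub_rpow_lt_sub_rpow_s19 {p a b : ℝ} (hp₀ : 0 < p) (hp₁ : p < 1) (hb : 0 < b)
    (hab : b < a) : a ^ p - b ^ p < (a - b) ^ p := by
  have h := rpow_add_lt_add_rpow_s19 hp₀ hp₁ (sub_pos.2 hab) hb
  rw [sub_add_cancel] at h
  linarith

end Real

theorem Phi_upper_bound (a b : ℝ) (hb : 0 < b) (hab : b < a) :
    ∀ x : ℝ, 1 < x → (a ^ (1 / x) - b ^ (1 / x)) ^ x < a - b := by
  intro x hx
  have hx₀ : 0 < x := one_pos.trans hx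
  have hp₀ : 0 < 1 / x := one_div_pos.2 hx₀
  have hp₁ : 1 / x < 1 := (div_lt_one hx₀).2 hx
  have hbase : 0 ≤ a ^ (1 / x) - b ^ (1 / x) :=
    sub_nonneg.2 (rpow_le_rpow hb.le hab.le hp₀.le)
  calc (a ^ (1 / x) - b ^ (1 / x)) ^ x < ((a - b) ^ (1 / x)) ^ x :=
        rpow_lt_rpow hbase (rpow_sub_rpow_lt_sub_rpow_s19 hp₀ hp₁ hb hab) hx₀
    _ = a - b := by rw [← rpow_mul (sub_pos.2 hab).le, one_div_mul_cancel hx₀.ne', rpow_one]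
end
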